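/- Let ρ be a subnormalized density matrix and M₁,…,M_m operators with 0 ≤ M_u² ≤ 1. Then Tr[M_m² M_{m−1}⋯M₁ ρ M₁⋯M_{m−1}] ≥ Tr[M_m² ρ] − 2 Σ_{u=1}^{m−1} D(M_u ρ M_u, ρ). -/

import Mathlib

open Matrix ComplexOrder BigOperators Finset

noncomputable def traceNorm {d : Type*} [Fintype d] [DecidableEq d] (A : Matrix d d ℂ) : ℝ :=
  (((Matrix.posSemidef_conjTranspose_mul_self A).1.eigenvectorUnitary : Matrix d d ℂ) *
      diagonal (fun i => ((√((Matrix.posSemidef_conjTranspose_mul_self A).1.eigenvalues i) : ℝ) : ℂ)) *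
      (star (Matrix.posSemidef_conjTranspose_mul_self A).1.eigenvectorUnitary : Matrix d d ℂ)).trace.re

noncomputable def traceDist {d : Type*} [Fintype d] [DecidableEq d] (A B : Matrix d d ℂ) : ℝ :=
  traceNorm (A - B) / 2

/-!
The trace norm of a Hermitian `X` is the maximum of `Re Tr (S X)` over `-1 ≤ S ≤ 1`, attained
at the sign of `X`. This gives the triangle inequality, and since conjugation by a self-adjoint
`C` with `C² ≤ 1` preserves the interval `[-1, 1]`, such a conjugation does not increase the trace
norm. Telescoping then gives `‖Mₖ⋯M₁ ρ M₁⋯Mₖ - ρ‖₁ ≤ Σᵤ ‖Mᵤ ρ Mᵤ - ρ‖₁`, and finally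
`Re Tr (M_m² Δ) ≥ -‖Δ‖₁` for `Δ = Mₖ⋯M₁ ρ M₁⋯Mₖ - ρ`, by the variational formula with
`S = -M_m²`.
-/

section StarOrderedRing

variable {R : Type*} [Ring R] [PartialOrder R] [StarRing R] [StarOrderedRing R]

theorem mul_self_le_one_of_nonneg_of_le_one {a : R} (h₀ : 0 ≤ a) (h₁ : a ≤ 1) : a * a ≤ 1 := by
  have h₁' : 0 ≤ 1 - a := sub_nonneg.2 h₁
  have key : 1 - a * a = (1 - a) + (1 - a) * a * (1 - a) + a * (1 - a) * a := by noncomm_ring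
  rw [← sub_nonneg, key]
  exact add_nonneg (add_nonneg h₁' (conjugate_nonneg_of_nonneg h₀ h₁'))
    (conjugate_nonneg_of_nonneg h₁' h₀)

theorem IsSelfAdjoint.conjugate_mem_Icc_neg_one_one {c s : R} (hc : IsSelfAdjoint c)
    (hcc : c * c ≤ 1) (hs₀ : -1 ≤ s) (hs₁ : s ≤ 1) : -1 ≤ c * s * c ∧ c * s * c ≤ 1 := by
  constructor
  · calc -1 ≤ -(c * c) := neg_le_neg hcc
      _ = c * (-1) * c := by noncomm_ring
      _ ≤ c * s * c := hc.conjugate_le_conjugate hs₀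
  · calc c * s * c ≤ c * 1 * c := hc.conjugate_le_conjugate hs₁
      _ = c * c := by rw [mul_one]
      _ ≤ 1 := hcc

end StarOrderedRing

section ConjugateByList

variable {R : Type*} [Monoid R]

theorem reverse_prod_mul_mul_prod_cons (c : R) (T : List R) (x : R) :
    (c :: T).reverse.prod * x * (c :: T).prod = T.reverse.prod * (c * x * c) * T.prod := by
  simp only [List.reverse_cons, List.prod_append, List.prod_cons, List.prod_nil, mul_one,
    mul_assoc]

theorem IsSelfAdjoint.reverse_prod_mul_mul_prod [StarMul R] {T : List R}
    (hT : ∀ c ∈ T, IsSelfAdjoint c) {x : R} (hx : IsSelfAdjoint x) :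
    IsSelfAdjoint (T.reverse.prod * x * T.prod) := by
  induction T generalizing x with
  | nil => simpa using hx
  | cons c T ih =>
    have hc : IsSelfAdjoint c := hT c List.mem_cons_self
    rw [reverse_prod_mul_mul_prod_cons]
    exact ih (fun a ha => hT a (List.mem_cons_of_mem c ha)) (hx.conjugate_self hc)

end ConjugateByList

open scoped MatrixOrder

theorem Matrix.trace_mul_nonneg {𝕜 n : Type*} [RCLike 𝕜] [Fintype n] {A B : Matrix n n 𝕜}
    (hA : 0 ≤ A) (hB : 0 ≤ B) : 0 ≤ (A * B).trace := by
  classical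
  have hs : IsSelfAdjoint (CFC.sqrt B) := (CFC.sqrt_nonneg B).isSelfAdjoint
  rw [← CFC.sqrt_mul_sqrt_self B, ← mul_assoc, trace_mul_cycle]
  exact (nonneg_iff_posSemidef.1 (hs.conjugate_nonneg hA)).trace_nonneg

section TraceNorm

variable {d : Type*} [Fintype d] [DecidableEq d]

theorem traceNorm_eq_re_trace_abs (A : Matrix d d ℂ) : traceNorm A = (CFC.abs A).trace.re := by
  have hA := posSemidef_conjTranspose_mul_self A
  rw [CFC.abs, star_eq_conjTranspose, CFC.sqrt_eq_real_sqrt _ hA.nonneg, cfcₙ_eq_cfc,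
    hA.1.cfc_eq, IsHermitian.cfc, Unitary.conjStarAlgAut_apply]
  rfl

theorem re_trace_mul_le_traceNorm {X S : Matrix d d ℂ} (hX : X.IsHermitian) (hS₀ : -1 ≤ S)
    (hS₁ : S ≤ 1) : (S * X).trace.re ≤ traceNorm X := by
  have hXsa : IsSelfAdjoint X := hX
  have hpos : 0 ≤ ((1 - S) * X⁺).trace :=
    trace_mul_nonneg (sub_nonneg.2 hS₁) (CFC.posPart_nonneg X)
  have hneg : 0 ≤ ((S + 1) * X⁻).trace :=
    trace_mul_nonneg (by simpa using sub_nonneg.2 hS₀) (CFC.negPart_nonneg X)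
  rw [Complex.nonneg_iff] at hpos hneg
  rw [traceNorm_eq_re_trace_abs, ← CFC.posPart_add_negPart X]
  nth_rw 1 [← CFC.posPart_sub_negPart X]
  simp only [mul_sub, sub_mul, add_mul, one_mul, trace_sub, trace_add, Complex.sub_re,
    Complex.add_re] at hpos hneg ⊢
  linarith

theorem exists_re_trace_mul_eq_traceNorm {X : Matrix d d ℂ} (hX : X.IsHermitian) :
    ∃ S : Matrix d d ℂ, -1 ≤ S ∧ S ≤ 1 ∧ (S * X).trace.re = traceNorm X := by
  have hXsa : IsSelfAdjoint X := hX
  -- the spectrum is finite, so the discontinuous sign function is admissible in `cfc`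
  have hcont : ∀ f : ℝ → ℝ, ContinuousOn f (spectrum ℝ X) :=
    fun f => finite_real_spectrum.continuousOn f
  let σ : ℝ → ℝ := fun x => if 0 ≤ x then 1 else -1
  have hσ : ∀ x, -1 ≤ σ x ∧ σ x ≤ 1 := fun x => by by_cases h : 0 ≤ x <;> simp [σ, h]
  have hσ_mul : ∀ x : ℝ, σ x * x = ‖x‖ := fun x => by
    by_cases h : 0 ≤ x
    · simp [σ, h, abs_of_nonneg h]
    · simp [σ, h, abs_of_neg (not_le.1 h)]
  refine ⟨cfc σ X, ?_, cfc_le_one σ X fun x _ => (hσ x).2, ?_⟩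
  · simpa using algebraMap_le_cfc σ (-1) X (fun x _ => (hσ x).1) (hcont σ)
  · rw [traceNorm_eq_re_trace_abs, CFC.abs_eq_cfc_norm X, ← funext hσ_mul,
      cfc_mul σ (fun x => x) X (hcont σ), cfc_id' ℝ X]

theorem neg_traceNorm_le_re_trace_mul {X A : Matrix d d ℂ} (hX : X.IsHermitian) (hA₀ : -1 ≤ A)
    (hA₁ : A ≤ 1) : -traceNorm X ≤ (A * X).trace.re := by
  have h := re_trace_mul_le_traceNorm hX (neg_le_neg hA₁) (neg_le.1 hA₀)
  rw [neg_mul, trace_neg, Complex.neg_re] at h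
  linarith

theorem traceNorm_add_le {X Y : Matrix d d ℂ} (hX : X.IsHermitian) (hY : Y.IsHermitian) :
    traceNorm (X + Y) ≤ traceNorm X + traceNorm Y := by
  obtain ⟨S, hS₀, hS₁, hS⟩ := exists_re_trace_mul_eq_traceNorm (hX.add hY)
  rw [← hS, mul_add, trace_add, Complex.add_re]
  exact add_le_add (re_trace_mul_le_traceNorm hX hS₀ hS₁) (re_trace_mul_le_traceNorm hY hS₀ hS₁)

theorem traceNorm_conj_le {X C : Matrix d d ℂ} (hX : X.IsHermitian) (hC : IsSelfAdjoint C)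
    (hCC : C * C ≤ 1) : traceNorm (C * X * C) ≤ traceNorm X := by
  obtain ⟨S, hS₀, hS₁, hS⟩ := exists_re_trace_mul_eq_traceNorm (hX.isSelfAdjoint.conjugate_self hC)
  obtain ⟨hCSC₀, hCSC₁⟩ := hC.conjugate_mem_Icc_neg_one_one hCC hS₀ hS₁
  rw [← hS, ← mul_assoc, trace_mul_cycle, ← mul_assoc]
  exact re_trace_mul_le_traceNorm hX hCSC₀ hCSC₁

theorem traceNorm_reverse_prod_mul_mul_prod_le {T : List (Matrix d d ℂ)}
    (hT : ∀ c ∈ T, IsSelfAdjoint c ∧ c * c ≤ 1) {X : Matrix d d ℂ} (hX : X.IsHermitian) :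
    traceNorm (T.reverse.prod * X * T.prod) ≤ traceNorm X := by
  induction T generalizing X with
  | nil => simp
  | cons c T ih =>
    obtain ⟨hc, hcc⟩ := hT c List.mem_cons_self
    rw [reverse_prod_mul_mul_prod_cons]
    calc _ ≤ traceNorm (c * X * c) :=
          ih (fun a ha => hT a (List.mem_cons_of_mem c ha)) (hX.isSelfAdjoint.conjugate_self hc)
      _ ≤ traceNorm X := traceNorm_conj_le hX hc hcc

theorem traceNorm_reverse_prod_mul_mul_prod_sub_le {T : List (Matrix d d ℂ)}
    (hT : ∀ c ∈ T, IsSelfAdjoint c ∧ c * c ≤ 1) {ρ : Matrix d d ℂ} (hρ : ρ.IsHermitian) :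
    traceNorm (T.reverse.prod * ρ * T.prod - ρ) ≤
      (T.map fun c => traceNorm (c * ρ * c - ρ)).sum := by
  induction T with
  | nil => simpa using (traceNorm_eq_re_trace_abs (0 : Matrix d d ℂ)).le
  | cons c T ih =>
    obtain ⟨hc, hcc⟩ := hT c List.mem_cons_self
    have hT' : ∀ a ∈ T, IsSelfAdjoint a ∧ a * a ≤ 1 := fun a ha => hT a (List.mem_cons_of_mem c ha)
    have hTsa : ∀ a ∈ T, IsSelfAdjoint a := fun a ha => (hT' a ha).1
    have hcρc : (c * ρ * c - ρ).IsHermitian := (hρ.isSelfAdjoint.conjugate_self hc).sub hρ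
    have hsplit : T.reverse.prod * (c * ρ * c) * T.prod - ρ =
        T.reverse.prod * (c * ρ * c - ρ) * T.prod + (T.reverse.prod * ρ * T.prod - ρ) := by
      noncomm_ring
    rw [reverse_prod_mul_mul_prod_cons, hsplit, List.map_cons, List.sum_cons]
    calc _ ≤ traceNorm (T.reverse.prod * (c * ρ * c - ρ) * T.prod) +
          traceNorm (T.reverse.prod * ρ * T.prod - ρ) :=
          traceNorm_add_le (IsSelfAdjoint.reverse_prod_mul_mul_prod hTsa hcρc)
            ((IsSelfAdjoint.reverse_prod_mul_mul_prod hTsa hρ).sub hρ)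
      _ ≤ _ := add_le_add (traceNorm_reverse_prod_mul_mul_prod_le hT' hcρc) (ih hT')

end TraceNorm

/-- `M` lists the paper's `M₁, …, M_{m-1}` (so the `m` here is the paper's `m - 1`) and `Mfin` is
its final operator `M_m`. -/
theorem bisection_success_bound_general {d : Type*} [Fintype d] [DecidableEq d]
    (ρ : Matrix d d ℂ) (hρ : ρ.PosSemidef)
    (m : ℕ) (M : Fin m → Matrix d d ℂ) (Mfin : Matrix d d ℂ)
    (hM : ∀ u, (M u).PosSemidef) (hM1 : ∀ u, ((1 : Matrix d d ℂ) - M u).PosSemidef)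
    (hMf : Mfin.PosSemidef) (hMf1 : ((1 : Matrix d d ℂ) - Mfin).PosSemidef) :
    ((Mfin * Mfin *
        ((List.ofFn M).reverse.prod * ρ * (List.ofFn M).prod)).trace).re ≥
      ((Mfin * Mfin * ρ).trace).re - 2 * ∑ u, traceDist (M u * ρ * M u) ρ := by
  set L := List.ofFn M
  have hL : ∀ c ∈ L, IsSelfAdjoint c ∧ c * c ≤ 1 := by
    intro c hc
    obtain ⟨u, rfl⟩ := List.mem_ofFn.1 hc
    have hu : 0 ≤ M u := nonneg_iff_posSemidef.2 (hM u)
    exact ⟨hu.isSelfAdjoint, mul_self_le_one_of_nonneg_of_le_one hu (hM1 u)⟩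
  have hΔ : (L.reverse.prod * ρ * L.prod - ρ).IsHermitian :=
    (IsSelfAdjoint.reverse_prod_mul_mul_prod (fun c hc => (hL c hc).1) hρ.1).sub hρ.1
  have hdrift : traceNorm (L.reverse.prod * ρ * L.prod - ρ) ≤
      2 * ∑ u, traceDist (M u * ρ * M u) ρ := by
    refine (traceNorm_reverse_prod_mul_mul_prod_sub_le hL hρ.1).trans_eq ?_
    simp only [L, List.map_ofFn, List.sum_ofFn, Function.comp_def, traceDist, Finset.mul_sum,
      mul_div_cancel₀ _ (two_ne_zero' ℝ)]
  have hF : 0 ≤ Mfin := nonneg_iff_posSemidef.2 hMf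
  have hfinal := neg_traceNorm_le_re_trace_mul hΔ
    ((neg_nonpos.2 zero_le_one).trans hF.isSelfAdjoint.mul_self_nonneg)
    (mul_self_le_one_of_nonneg_of_le_one hF hMf1)
  rw [mul_sub, trace_sub, Complex.sub_re] at hfinal
  linarith

/-- Key success-probability bound for the bisection decoding protocol:
Tr[M_m² M_{m−1}⋯M₁ ρ M₁⋯M_{m−1}] ≥ Tr[M_m² ρ] − 2 Σ_u D(M_u ρ M_u, ρ),
where `Mfin` plays the role of the final operator M_m and `M` lists M₁,…,M_{m−1}. -/
theorem bisection_success_bound {d : Type*} [Fintype d] [DecidableEq d]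
    (ρ : Matrix d d ℂ) (hρ : ρ.PosSemidef) (hρtr : (ρ.trace).re ≤ 1)
    (m : ℕ) (M : Fin m → Matrix d d ℂ) (Mfin : Matrix d d ℂ)
    (hM : ∀ u, (M u).PosSemidef) (hM1 : ∀ u, ((1 : Matrix d d ℂ) - M u).PosSemidef)
    (hMf : Mfin.PosSemidef) (hMf1 : ((1 : Matrix d d ℂ) - Mfin).PosSemidef) :
    ((Mfin * Mfin *
        ((List.ofFn M).reverse.prod * ρ * (List.ofFn M).prod)).trace).re ≥
      ((Mfin * Mfin * ρ).trace).re - 2 * ∑ u, traceDist (M u * ρ * M u) ρ :=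
  bisection_success_bound_general ρ hρ m M Mfin hM hM1 hMf hMf1
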